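/- arXiv:1805.10363 — 2 statements merged into one kernel-verified Lean document; each statement's English description precedes it below -/
import Mathlib

section
/- For fixed α > 0, the limit as r → 0⁺ of B_2(r) := (1/r²)(3·B_1(r) + (4α²/√(απ))·exp(-α r²)) exists and equals -(8/5)·α^{5/2}/√π, where B_1(r) = (1/r²)(-erf(√α·r)/r + (2α/√(απ))·exp(-αr²)). -/
/-- The error function `erf(x) = (2/√π) ∫₀ˣ exp(-t²) dt`. -/
noncomputable def erf (x : ℝ) : ℝ :=
  (2 / Real.sqrt Real.pi) * ∫ t in (0:ℝ)..x, Real.exp (-t ^ 2)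

/-- `B_1` from the recursion, explicitly. -/
noncomputable def B1 (α : ℝ) (r : ℝ) : ℝ :=
  (1 / r ^ 2) * (-erf (Real.sqrt α * r) / r
    + 2 * α / Real.sqrt (α * Real.pi) * Real.exp (-α * r ^ 2))

/-!
Clearing denominators, `-r⁵ B₂(r) = N(r) := 3 erf(√α r) - c (3r + 2αr³) e^{-αr²}` with
`c = 2√α/√π`. The derivative of `N` collapses to `4α²c r⁴ e^{-αr²}` and `N(0) = 0`, so
L'Hôpital's rule against `r⁵` gives `N(r)/r⁵ → 4α²c/5`, i.e. `B₂(r) → -(8/5) α^{5/2}/√π`.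
-/

open Real Filter Topology

noncomputable def B2 (α r : ℝ) : ℝ :=
  (1 / r ^ 2) * (3 * B1 α r + 4 * α ^ 2 / √(α * π) * exp (-α * r ^ 2))

noncomputable def B2Numerator (α r : ℝ) : ℝ :=
  3 * erf (√α * r) - 2 * √α / √π * ((3 * r + 2 * α * r ^ 3) * exp (-α * r ^ 2))

lemma hasDerivAt_erf (x : ℝ) : HasDerivAt erf (2 / √π * exp (-x ^ 2)) x := by
  have hc : Continuous fun t : ℝ => exp (-t ^ 2) := by fun_prop
  exact (intervalIntegral.integral_hasDerivAt_right (hc.intervalIntegrable 0 x)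
    hc.aestronglyMeasurable.stronglyMeasurableAtFilter hc.continuousAt).const_mul _

lemma hasDerivAt_erf_sqrt_mul {α : ℝ} (hα : 0 ≤ α) (x : ℝ) :
    HasDerivAt (fun r => erf (√α * r)) (2 * √α / √π * exp (-α * x ^ 2)) x := by
  refine ((hasDerivAt_erf (√α * x)).comp x ((hasDerivAt_id x).const_mul √α)).congr_deriv ?_
  rw [mul_pow, sq_sqrt hα, neg_mul]
  ring

lemma hasDerivAt_cubic_mul_gaussian (α x : ℝ) :
    HasDerivAt (fun r => (3 * r + 2 * α * r ^ 3) * exp (-α * r ^ 2))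
      ((3 - 4 * α ^ 2 * x ^ 4) * exp (-α * x ^ 2)) x := by
  have hpoly : HasDerivAt (fun r => 3 * r + 2 * α * r ^ 3) (3 + 2 * α * (3 * x ^ 2)) x := by
    refine (((hasDerivAt_id x).const_mul 3).add
      ((hasDerivAt_pow 3 x).const_mul (2 * α))).congr_deriv ?_
    simp
  have hexp : HasDerivAt (fun r => exp (-α * r ^ 2)) (exp (-α * x ^ 2) * (-α * (2 * x))) x := by
    simpa using ((hasDerivAt_pow 2 x).const_mul (-α)).exp
  exact (hpoly.mul hexp).congr_deriv (by ring)

lemma hasDerivAt_B2Numerator {α : ℝ} (hα : 0 ≤ α) (x : ℝ) :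
    HasDerivAt (B2Numerator α) (4 * α ^ 2 * (2 * √α / √π) * x ^ 4 * exp (-α * x ^ 2)) x :=
  (((hasDerivAt_erf_sqrt_mul hα x).const_mul 3).sub
    ((hasDerivAt_cubic_mul_gaussian α x).const_mul (2 * √α / √π))).congr_deriv (by ring)

lemma B2_eq_neg_B2Numerator_div {α r : ℝ} (hα : 0 < α) (hr : r ≠ 0) :
    B2 α r = -B2Numerator α r / r ^ 5 := by
  obtain ⟨s, hs, rfl⟩ : ∃ s, 0 < s ∧ s ^ 2 = α := ⟨√α, sqrt_pos.2 hα, sq_sqrt hα.le⟩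
  rw [B2, B1, B2Numerator, sqrt_mul (sq_nonneg s), sqrt_sq hs.le]
  field_simp
  ring

lemma tendsto_B2Numerator_div_pow_five {α : ℝ} (hα : 0 ≤ α) :
    Tendsto (fun r => B2Numerator α r / r ^ 5) (𝓝[>] 0)
      (𝓝 (4 * α ^ 2 * (2 * √α / √π) / 5)) := by
  set K := 4 * α ^ 2 * (2 * √α / √π)
  have hN : Tendsto (B2Numerator α) (𝓝[>] 0) (𝓝 0) := by
    simpa [B2Numerator, erf] using
      (hasDerivAt_B2Numerator hα 0).continuousAt.tendsto.mono_left nhdsWithin_le_nhds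
  have hpow : Tendsto (fun r : ℝ => r ^ 5) (𝓝[>] 0) (𝓝 0) :=
    (continuous_pow 5).tendsto' 0 0 (zero_pow (by norm_num)) |>.mono_left nhdsWithin_le_nhds
  have hpow' : ∀ᶠ x in 𝓝[>] (0 : ℝ), 5 * x ^ 4 ≠ 0 := by
    filter_upwards [self_mem_nhdsWithin] with x hx
    exact mul_ne_zero (by norm_num) (pow_ne_zero _ (ne_of_gt hx))
  have hratio : Tendsto (fun x => K * x ^ 4 * exp (-α * x ^ 2) / (5 * x ^ 4)) (𝓝[>] 0)
      (𝓝 (K / 5)) := by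
    have hcont : Continuous fun x => K * exp (-α * x ^ 2) / 5 := by fun_prop
    have hlim : Tendsto (fun x => K * exp (-α * x ^ 2) / 5) (𝓝[>] 0) (𝓝 (K / 5)) := by
      simpa using hcont.tendsto 0 |>.mono_left nhdsWithin_le_nhds
    refine hlim.congr' ?_
    filter_upwards [self_mem_nhdsWithin] with x hx
    have hx0 : x ≠ 0 := ne_of_gt hx
    field_simp
  exact HasDerivAt.lhopital_zero_nhdsGT (.of_forall (hasDerivAt_B2Numerator hα))
    (.of_forall fun x => by simpa using hasDerivAt_pow 5 x) hpow' hN hpow hratio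

lemma rpow_five_halves {α : ℝ} (hα : 0 ≤ α) : α ^ ((5 : ℝ) / 2) = α ^ 2 * √α := by
  rw [sqrt_eq_rpow, ← rpow_natCast, ← rpow_add' hα (by norm_num)]
  norm_num

theorem B2_tendsto_at_zero (α : ℝ) (hα : 0 < α) :
    Filter.Tendsto
      (fun r : ℝ => (1 / r ^ 2) * (3 * B1 α r
        + 4 * α ^ 2 / Real.sqrt (α * Real.pi) * Real.exp (-α * r ^ 2)))
      (nhdsWithin 0 (Set.Ioi 0))
      (nhds (-(8 / 5) * α ^ ((5 : ℝ) / 2) / Real.sqrt Real.pi)) := by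
  have hlim := (tendsto_B2Numerator_div_pow_five hα.le).neg
  rw [show -(4 * α ^ 2 * (2 * √α / √π) / 5) = -(8 / 5) * α ^ ((5 : ℝ) / 2) / √π by
    rw [rpow_five_halves hα.le]; ring] at hlim
  refine hlim.congr' ?_
  filter_upwards [self_mem_nhdsWithin] with r hr
  rw [← B2, B2_eq_neg_B2Numerator_div hα (ne_of_gt hr), neg_div]
end

section
/- For every nonnegative integer n, the sum Σ_{k=0}^{n} (-2)^k · C(n,k) · k!/(2k+1)! · (2^k k!) simplifies via the identity Σ_{k=0}^n (-1)^k 2^k k! C(n,k)/(2k+1)!! = 1/(2n+1). -/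
/-!
The `k`-th term is `(-1)ᵏ C(n,k) ∫₀¹ (1 - x²)ᵏ dx`, since this Wallis integral equals
`2ᵏ k! / (2k+1)‼` (differentiating `x (1 - x²)ᵏ⁺¹` gives its recurrence). By the binomial
theorem the sum is then `∫₀¹ (1 - (1 - x²))ⁿ dx = ∫₀¹ x²ⁿ dx = 1 / (2n+1)`.
-/

open scoped Nat
open Finset intervalIntegral

theorem hasDerivAt_mul_one_sub_sq_pow_succ (k : ℕ) (x : ℝ) :
    HasDerivAt (fun x : ℝ => x * (1 - x ^ 2) ^ (k + 1))
      ((2 * k + 3) * (1 - x ^ 2) ^ (k + 1) - (2 * k + 2) * (1 - x ^ 2) ^ k) x := by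
  refine ((hasDerivAt_id x).mul
    (((hasDerivAt_pow 2 x).const_sub 1).pow (k + 1))).congr_deriv ?_
  simp only [id, Pi.pow_apply]
  push_cast
  ring

theorem integral_one_sub_sq_pow_succ (k : ℕ) :
    (2 * k + 3 : ℝ) * ∫ x in (0 : ℝ)..1, (1 - x ^ 2) ^ (k + 1) =
      (2 * k + 2) * ∫ x in (0 : ℝ)..1, (1 - x ^ 2) ^ k := by
  have ftc := integral_eq_sub_of_hasDerivAt (a := 0) (b := 1)
    (fun x _ => hasDerivAt_mul_one_sub_sq_pow_succ k x)
    (Continuous.intervalIntegrable (by fun_prop) _ _)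
  rw [integral_sub (Continuous.intervalIntegrable (by fun_prop) _ _)
    (Continuous.intervalIntegrable (by fun_prop) _ _), integral_const_mul,
    integral_const_mul] at ftc
  norm_num at ftc
  linarith

theorem integral_one_sub_sq_pow (k : ℕ) :
    ∫ x in (0 : ℝ)..1, (1 - x ^ 2) ^ k = (2 ^ k * k ! / (2 * k + 1)‼ : ℝ) := by
  induction k with
  | zero => simp
  | succ k ih =>
    have h := integral_one_sub_sq_pow_succ k
    rw [ih] at h
    rw [show 2 * (k + 1) + 1 = 2 * k + 1 + 2 by ring, Nat.doubleFactorial_add_two,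
      Nat.factorial_succ]
    push_cast at h ⊢
    have : ((2 * k + 1)‼ : ℝ) ≠ 0 := by positivity
    field_simp at h ⊢
    linear_combination h

theorem sum_identity_substituted (n : ℕ) :
    ∑ k ∈ Finset.range (n + 1),
        (-1 : ℝ) ^ k * 2 ^ k * (k ! : ℝ) * (n.choose k : ℝ) / ((2 * k + 1)‼ : ℝ) =
      1 / (2 * n + 1) := by
  calc _ = ∑ k ∈ range (n + 1),
        ∫ x in (0 : ℝ)..1, (x ^ 2 - 1) ^ k * 1 ^ (n - k) * (n.choose k : ℝ) := by
        refine sum_congr rfl fun k _ => ?_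
        have sign : ∀ x : ℝ, (x ^ 2 - 1) ^ k = (-1) ^ k * (1 - x ^ 2) ^ k := fun x => by
          rw [← mul_pow]; ring
        simp_rw [one_pow, mul_one, integral_mul_const, sign, integral_const_mul,
          integral_one_sub_sq_pow]
        ring
    _ = ∫ x in (0 : ℝ)..1, (x ^ 2 - 1 + 1) ^ n := by
        simp_rw [add_pow]
        exact (integral_finsetSum fun k _ =>
          Continuous.intervalIntegrable (by fun_prop) _ _).symm
    _ = 1 / (2 * n + 1) := by
        simp [← pow_mul, integral_pow]
end
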